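/- If the positions r_i ∈ ℝ³ are pairwise distinct and the weights α_{ij} ≥ 0 satisfy Σ_{i<j} α_{ij} = 1, then the gradient of F(r) = Σ_{i<j} α_{ij} [(x_i-x_j)^4 + (y_i-y_j)^4 + ((z_i-z_j)/c)^4] at r is nonzero. -/

import Mathlib

/-!
`F` is a sum of quartic forms in the differences `r i - r j`, hence homogeneous of degree 4, so
Euler's identity gives `F'(r) r = 4 F(r)`. Every pair with `i < j` carrying positive weight
contributes a positive term (the positions are distinct), and such a pair exists since the weights
sum to 1; thus `F(r) > 0` and the derivative cannot vanish.
-/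

open Finset

section Homogeneous

variable {E G : Type*} [NormedAddCommGroup E] [NormedSpace ℝ E]
  [NormedAddCommGroup G] [NormedSpace ℝ G] {F : E → G} {F' : E →L[ℝ] G} {x : E}

theorem HasFDerivAt.apply_self_eq_of_homogeneous (n : ℕ) (hF : HasFDerivAt F F' x)
    (hhom : ∀ t : ℝ, F (t • x) = t ^ n • F x) : F' x = (n : ℝ) • F x := by
  have hchain : HasDerivAt (fun t : ℝ => F (t • x)) (F' x) 1 := by
    have hline : HasDerivAt (fun t : ℝ => t • x) x 1 := by
      simpa using (hasDerivAt_id (1 : ℝ)).smul_const x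
    rw [← one_smul ℝ x] at hF
    simpa [Function.comp_def] using hF.comp_hasDerivAt (1 : ℝ) hline
  have hpow : HasDerivAt (fun t : ℝ => F (t • x)) ((n : ℝ) • F x) 1 := by
    simp_rw [hhom]
    simpa using (hasDerivAt_pow n (1 : ℝ)).smul_const (F x)
  exact hchain.unique hpow

theorem fderiv_ne_zero_of_homogeneous {n : ℕ} (hn : n ≠ 0) (hF : DifferentiableAt ℝ F x)
    (hhom : ∀ t : ℝ, F (t • x) = t ^ n • F x) (hx : F x ≠ 0) : fderiv ℝ F x ≠ 0 := by
  intro hzero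
  have heuler := hF.hasFDerivAt.apply_self_eq_of_homogeneous n hhom
  rw [hzero, zero_apply, eq_comm, smul_eq_zero] at heuler
  exact heuler.elim (by exact_mod_cast hn) hx

end Homogeneous

theorem Fintype.sum_mul_pos_of_sum_eq_one {ι : Type*} [Fintype ι] {w f : ι → ℝ}
    (hw : ∀ i, 0 ≤ w i) (hsum : ∑ i, w i = 1) (hf : ∀ i, w i ≠ 0 → 0 < f i)
    (hf₀ : ∀ i, 0 ≤ f i) : 0 < ∑ i, w i * f i := by
  obtain ⟨i, hi⟩ : ∃ i, w i ≠ 0 := by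
    by_contra! h
    simp [h] at hsum
  exact sum_pos' (fun j _ => mul_nonneg (hw j) (hf₀ j))
    ⟨i, mem_univ i, mul_pos ((hw i).lt_of_ne' hi) (hf i hi)⟩

noncomputable def quarticForm (c : ℝ) (u : Fin 3 → ℝ) : ℝ := u 0 ^ 4 + u 1 ^ 4 + (u 2 / c) ^ 4

theorem quarticForm_nonneg (c : ℝ) (u : Fin 3 → ℝ) : 0 ≤ quarticForm c u := by
  unfold quarticForm
  positivity

theorem quarticForm_pos {c : ℝ} (hc : c ≠ 0) {u : Fin 3 → ℝ} (hu : u ≠ 0) :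
    0 < quarticForm c u := by
  have h4 : Even 4 := by decide
  obtain ⟨k, hk⟩ := Function.ne_iff.mp hu
  unfold quarticForm
  fin_cases k
  · have := h4.pow_pos hk
    positivity
  · have := h4.pow_pos hk
    positivity
  · have := h4.pow_pos (div_ne_zero hk hc)
    positivity

theorem quarticForm_smul (c t : ℝ) (u : Fin 3 → ℝ) :
    quarticForm c (t • u) = t ^ 4 * quarticForm c u := by
  simp only [quarticForm, Pi.smul_apply, smul_eq_mul]
  ring

variable {m : ℕ}

noncomputable def pairEnergy (c : ℝ) (α : Fin m → Fin m → ℝ) (r : Fin m → Fin 3 → ℝ) : ℝ :=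
  ∑ i, ∑ j, if i < j then α i j * quarticForm c (r i - r j) else 0

theorem differentiable_pairEnergy (c : ℝ) (α : Fin m → Fin m → ℝ) :
    Differentiable ℝ (pairEnergy c α) := by
  unfold pairEnergy quarticForm
  refine Differentiable.fun_sum fun i _ => Differentiable.fun_sum fun j _ => ?_
  split_ifs
  · fun_prop
  · fun_prop

theorem pairEnergy_smul (c : ℝ) (α : Fin m → Fin m → ℝ) (r : Fin m → Fin 3 → ℝ) (t : ℝ) :
    pairEnergy c α (t • r) = t ^ 4 * pairEnergy c α r := by
  simp only [pairEnergy, mul_sum, mul_ite, mul_zero, Pi.smul_apply, ← smul_sub, quarticForm_smul]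
  refine sum_congr rfl fun i _ => sum_congr rfl fun j _ => ?_
  split_ifs <;> ring

theorem pairEnergy_pos {c : ℝ} (hc : c ≠ 0) {α : Fin m → Fin m → ℝ} (hα : ∀ i j, 0 ≤ α i j)
    (hsum : ∑ i, ∑ j, (if i < j then α i j else 0) = 1) {r : Fin m → Fin 3 → ℝ}
    (hdist : ∀ i j, i ≠ j → r i ≠ r j) : 0 < pairEnergy c α r := by
  have hterm (i j : Fin m) : (if i < j then α i j * quarticForm c (r i - r j) else 0) =
      (if i < j then α i j else 0) * quarticForm c (r i - r j) := by
    rw [ite_mul, zero_mul]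
  simp only [pairEnergy, hterm, ← Fintype.sum_prod_type'] at hsum ⊢
  refine Fintype.sum_mul_pos_of_sum_eq_one (fun p => ?_) hsum (fun p hp => ?_)
    (fun p => quarticForm_nonneg c _)
  · split_ifs
    exacts [hα _ _, le_rfl]
  · have hlt : p.1 < p.2 := by
      by_contra h
      exact hp (if_neg h)
    exact quarticForm_pos hc (sub_ne_zero.mpr (hdist _ _ hlt.ne))

theorem stmt2_general (m : ℕ) (c : ℝ) (hc : 0 < c)
    (α : Fin m → Fin m → ℝ) (hα : ∀ i j, 0 ≤ α i j)
    (hsum : ∑ i : Fin m, ∑ j : Fin m, (if i < j then α i j else 0) = 1)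
    (r : Fin m → Fin 3 → ℝ) (hdist : ∀ i j : Fin m, i ≠ j → r i ≠ r j) :
    fderiv ℝ (fun r : Fin m → Fin 3 → ℝ =>
        ∑ i : Fin m, ∑ j : Fin m, if i < j then
          α i j * ((r i 0 - r j 0) ^ 4 + (r i 1 - r j 1) ^ 4 + ((r i 2 - r j 2) / c) ^ 4)
        else 0) r ≠ 0 :=
  fderiv_ne_zero_of_homogeneous four_ne_zero (differentiable_pairEnergy c α r)
    (pairEnergy_smul c α r) (pairEnergy_pos hc.ne' hα hsum hdist).ne'

/-- with pairwise distinct positions and convex-combination weights,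
the gradient of F at r is nonzero. -/
theorem stmt2 (m : ℕ) (hm : 2 ≤ m) (c : ℝ) (hc : 0 < c)
    (α : Fin m → Fin m → ℝ) (hα : ∀ i j, 0 ≤ α i j)
    (hsum : ∑ i : Fin m, ∑ j : Fin m, (if i < j then α i j else 0) = 1)
    (r : Fin m → Fin 3 → ℝ) (hdist : ∀ i j : Fin m, i ≠ j → r i ≠ r j) :
    fderiv ℝ (fun r : Fin m → Fin 3 → ℝ =>
        ∑ i : Fin m, ∑ j : Fin m, if i < j then
          α i j * ((r i 0 - r j 0) ^ 4 + (r i 1 - r j 1) ^ 4 + ((r i 2 - r j 2) / c) ^ 4)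
        else 0) r ≠ 0 :=
  stmt2_general m c hc α hα hsum r hdist
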